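/- For every q ≥ 2 and L ≥ 2 there exists a finite set Ω_L of probability distributions on [L] such that for every n ≥ 1 and all x_1,...,x_L ∈ (∂Δ)^n, rad(x_1,...,x_L) = max_{ω∈Ω_L} rad_ω(x_1,...,x_L). -/

import Mathlib

/-!
Write `x_i = φ(k_i)`. For fixed weights `ω`, the objective `∑ ω_i d(x_i, y)` is affine in `y` and
splits over coordinates, so it is minimised by putting all of `y(j)` on a colour of largest weight
`∑_{k_i(j) = c} ω_i`; this gives `rad_ω` in closed form (`dualObjective`). Sion's minimax theorem
gives `rad = max_{ω ∈ Δ} rad_ω`.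

The closed form is piecewise linear in `ω`, with pieces cut out by the hyperplanes
`∑_{i ∈ P} ω_i = ∑_{i ∈ Q} ω_i` (`P, Q ⊆ [L]`), which depend neither on `n` nor on `q`. Take an
extreme point of the compact set of maximisers. Along a line through it that keeps every equation
it satisfies, the objective is locally linear and maximal at the point, hence locally constant, so
the line stays among the maximisers; by extremality the line is degenerate. Hence the point is a
vertex of the arrangement, and vertices in `Δ` are determined by the equations they satisfy, so
there are finitely many of them.
-/

open Finset

/-- A probability distribution on a finite type. -/
def IsDist {α : Type*} [Fintype α] (P : α → ℝ) : Prop :=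
  (∀ a, 0 ≤ P a) ∧ ∑ a, P a = 1

/-- The embedding `φ : [q] → ∂Δ` sending `x` to the standard basis vector `e_x`. -/
noncomputable def phi (q : ℕ) (x : Fin q) : Fin q → ℝ := fun k => if k = x then 1 else 0

/-- `d(x,y) = (1/2) ∑_j ‖x(j) − y(j)‖₁` for blocks in `ℝ^q`. -/
noncomputable def dvec {q n : ℕ} (x y : Fin n → Fin q → ℝ) : ℝ :=
  (1 / 2) * ∑ j, ∑ k, |x j k - y j k|

/-- The relaxed Chebyshev radius `rad(x₁,…,x_L) = (1/n) inf_{y∈Δⁿ} max_i d(xᵢ,y)`. -/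
noncomputable def radRelax {q n L : ℕ} (xs : Fin L → Fin n → Fin q → ℝ) : ℝ :=
  (1 / (n : ℝ)) *
    sInf {r : ℝ | ∃ y : Fin n → Fin q → ℝ, (∀ j, IsDist (y j)) ∧ r = ⨆ i, dvec (xs i) y}

/-- The weighted average radius `rad_ω(x₁,…,x_L) = (1/n) inf_{y∈Δⁿ} ∑_i ω(i) d(xᵢ,y)`. -/
noncomputable def radOmega {q n L : ℕ} (ω : Fin L → ℝ) (xs : Fin L → Fin n → Fin q → ℝ) : ℝ :=
  (1 / (n : ℝ)) *
    sInf {r : ℝ | ∃ y : Fin n → Fin q → ℝ, (∀ j, IsDist (y j)) ∧ r = ∑ i, ω i * dvec (xs i) y}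

open Filter Topology

theorem ConvexOn.finset_sum {ι E : Type*} [AddCommGroup E] [Module ℝ E] {s : Set E}
    (hs : Convex ℝ s) (t : Finset ι) {f : ι → E → ℝ} (hf : ∀ i ∈ t, ConvexOn ℝ s (f i)) :
    ConvexOn ℝ s fun x => ∑ i ∈ t, f i x := by
  classical
  induction t using Finset.induction_on with
  | empty => simpa using convexOn_const (0 : ℝ) hs
  | insert i t hi ih =>
    simp only [Finset.sum_insert hi]
    exact (hf i (mem_insert_self i t)).add (ih fun j hj => hf j (mem_insert_of_mem hj))

theorem exists_forall_le_sum_mul_of_convexOn {ι E : Type*} [Fintype ι] [Nonempty ι]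
    [TopologicalSpace E] [AddCommGroup E] [Module ℝ E] [IsTopologicalAddGroup E]
    [ContinuousSMul ℝ E] {Y : Set E} (hne : Y.Nonempty) (hconv : Convex ℝ Y)
    (hcpt : IsCompact Y) {g : ι → E → ℝ} (hgc : ∀ i, ContinuousOn (g i) Y)
    (hg : ∀ i, ConvexOn ℝ Y (g i)) :
    ∃ y₀ ∈ Y, ∃ ω ∈ stdSimplex ℝ ι, ∀ y ∈ Y, ∀ i, g i y₀ ≤ ∑ j, ω j * g j y := by
  classical
  obtain ⟨y₀, hy₀, ω, hω, hsaddle⟩ :=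
    Sion.exists_isSaddlePointOn (f := fun y (ω : ι → ℝ) => ∑ j, ω j * g j y) hne hconv hcpt
      (fun ω _ => (continuousOn_finsetSum _ fun j _ =>
        continuousOn_const.mul (hgc j)).lowerSemicontinuousOn)
      (fun ω hω => (ConvexOn.finset_sum hconv _ fun j _ => (hg j).smul (hω.1 j)).quasiconvexOn)
      (convex_stdSimplex ℝ ι) ⟨_, single_mem_stdSimplex ℝ (Classical.arbitrary ι)⟩
      (isCompact_stdSimplex ℝ ι)
      (fun y _ => (by fun_prop : Continuous fun ω : ι → ℝ => ∑ j, ω j * g j y)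
        |>.upperSemicontinuous.upperSemicontinuousOn _)
      (fun y _ => ((Fintype.linearCombination ℝ fun j => g j y).concaveOn
        (convex_stdSimplex ℝ ι)).quasiconcaveOn)
  refine ⟨y₀, hy₀, ω, hω, fun y hy i => ?_⟩
  simpa [Pi.single_apply] using hsaddle y hy _ (single_mem_stdSimplex ℝ i)

theorem eventually_forall_nonneg_add_mul {ι : Type*} [Finite ι] {a b : ι → ℝ}
    (ha : ∀ i, 0 ≤ a i) (hb : ∀ i, a i = 0 → b i = 0) :
    ∀ᶠ t in 𝓝 (0 : ℝ), ∀ i, 0 ≤ a i + t * b i := by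
  refine eventually_all.2 fun i => ?_
  rcases (ha i).eq_or_lt with h | h
  · exact .of_forall fun t => by simp [← h, hb i h.symm]
  · have hcont : Continuous fun t : ℝ => a i + t * b i := by fun_prop
    exact (hcont.tendsto' 0 _ (by simp)).eventually (lt_mem_nhds h) |>.mono fun _ => le_of_lt

theorem eq_zero_of_eventually_mul_nonpos {s : ℝ} (h : ∀ᶠ t in 𝓝 (0 : ℝ), t * s ≤ 0) : s = 0 := by
  have hs : ∀ᶠ δ in 𝓝[>] (0 : ℝ), 0 < δ ∧ δ * s * s ≤ 0 :=
    eventually_mem_nhdsWithin.and <| nhdsWithin_le_nhds <|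
      ((continuous_id.mul continuous_const).tendsto' 0 0 (by simp)).eventually h
  obtain ⟨δ, hδ, hδs⟩ := hs.exists
  by_contra hs0
  nlinarith [mul_pos hδ (mul_self_pos.2 hs0)]

theorem exists_eventually_sup'_add_mul {κ : Type*} [Fintype κ] [Nonempty κ] (a b : κ → ℝ)
    (hab : ∀ c c', a c = a c' → b c = b c') :
    ∃ s, ∀ᶠ t in 𝓝 (0 : ℝ),
      univ.sup' univ_nonempty (fun c => a c + t * b c) = univ.sup' univ_nonempty a + t * s := by
  obtain ⟨c₀, -, hc₀⟩ := univ.exists_mem_eq_sup' univ_nonempty a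
  have hle : ∀ c, a c ≤ a c₀ := fun c => hc₀ ▸ le_sup' a (mem_univ c)
  refine ⟨b c₀, ?_⟩
  filter_upwards [eventually_forall_nonneg_add_mul (fun c => sub_nonneg.2 (hle c))
    (fun c h => sub_eq_zero.2 (hab _ _ (sub_eq_zero.1 h)))] with t ht
  rw [hc₀]
  refine le_antisymm (sup'_le _ _ fun c _ => ?_) (le_sup'_of_le _ (mem_univ c₀) le_rfl)
  linarith [ht c]

theorem eq_zero_of_mem_extremePoints_of_eventually_add_smul_mem {E : Type*} [AddCommGroup E]
    [Module ℝ E] {A : Set E} {x d : E} (hx : x ∈ A.extremePoints ℝ)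
    (h : ∀ᶠ t in 𝓝 (0 : ℝ), x + t • d ∈ A) : d = 0 := by
  obtain ⟨ε, hε, hball⟩ := Metric.eventually_nhds_iff.1 h
  have hmem : ∀ t : ℝ, |t| = ε / 2 → x + t • d ∈ A := fun t ht =>
    hball (by rw [Real.dist_eq, sub_zero, ht]; linarith)
  have hseg : x ∈ openSegment ℝ (x + (ε / 2) • d) (x + (-(ε / 2)) • d) :=
    ⟨1 / 2, 1 / 2, by norm_num, by norm_num, by norm_num, by module⟩
  have hfix := ((mem_extremePoints.1 hx).2 _ (hmem _ (abs_of_pos (by linarith)))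
    _ (hmem _ (by rw [abs_neg, abs_of_pos (by linarith)])) hseg).1
  simpa [hε.ne'] using hfix

theorem eventually_add_smul_mem_stdSimplex {ι : Type*} [Fintype ι] {ω d : ι → ℝ}
    (hω : ω ∈ stdSimplex ℝ ι) (hd : ∑ i, d i = 0) (hzero : ∀ i, ω i = 0 → d i = 0) :
    ∀ᶠ t in 𝓝 (0 : ℝ), ω + t • d ∈ stdSimplex ℝ ι := by
  filter_upwards [eventually_forall_nonneg_add_mul hω.1 hzero] with t ht
  refine ⟨ht, ?_⟩
  simp [sum_add_distrib, ← mul_sum, hd, hω.2]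

theorem convex_setOf_forall_isDist {ι α : Type*} [Fintype α] :
    Convex ℝ {y : ι → α → ℝ | ∀ j, IsDist (y j)} :=
  fun _ hy _ hy' _ _ ha hb hab j => convex_stdSimplex ℝ α (hy j) (hy' j) ha hb hab

theorem isCompact_setOf_forall_isDist {ι α : Type*} [Fintype α] :
    IsCompact {y : ι → α → ℝ | ∀ j, IsDist (y j)} := by
  have hpi : {y : ι → α → ℝ | ∀ j, IsDist (y j)} = Set.univ.pi fun _ => stdSimplex ℝ α := by
    ext
    simp only [Set.mem_ofPred_eq, Set.mem_univ_pi]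
    rfl
  exact hpi ▸ isCompact_univ_pi fun _ => isCompact_stdSimplex ℝ α

noncomputable def signedSum {ι : Type*} (p : Finset ι × Finset ι) : (ι → ℝ) →ₗ[ℝ] ℝ :=
  ∑ i ∈ p.1, LinearMap.proj i - ∑ i ∈ p.2, LinearMap.proj i

@[simp]
theorem signedSum_apply {ι : Type*} (p : Finset ι × Finset ι) (ω : ι → ℝ) :
    signedSum p ω = ∑ i ∈ p.1, ω i - ∑ i ∈ p.2, ω i := by
  simp [signedSum]

section IsVertex
variable {ι : Type*} [Fintype ι]

/-- `ω` is a vertex of the arrangement of hyperplanes `∑_{i ∈ P} ω i = ∑_{i ∈ Q} ω i`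
(`P, Q ⊆ ι`) inside the hyperplane `∑ ω i = const`. -/
def IsVertex (ω : ι → ℝ) : Prop :=
  ∀ ω' : ι → ℝ, ∑ i, ω' i = ∑ i, ω i →
    (∀ p, signedSum p ω = 0 → signedSum p ω' = 0) → ω' = ω

theorem finite_setOf_isVertex : {ω ∈ stdSimplex ℝ ι | IsVertex ω}.Finite := by
  refine Set.Finite.of_finite_image (f := fun ω => {p | signedSum p ω = 0}) (Set.toFinite _) ?_
  rintro ω₁ ⟨hω₁, -⟩ ω₂ ⟨hω₂, hvert⟩ heq
  exact hvert ω₁ (hω₁.2.trans hω₂.2.symm) fun p hp => (Set.ext_iff.1 heq p).2 hp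

end IsVertex

section ClosedForm

variable {q n L : ℕ}

theorem isDist_phi (x : Fin q) : IsDist (phi q x) :=
  ⟨fun c => by unfold phi; split <;> norm_num, by simp [phi]⟩

theorem sum_abs_phi_sub (x : Fin q) {p : Fin q → ℝ} (hp : IsDist p) :
    ∑ c, |phi q x c - p c| = 2 * (1 - p x) := by
  have hpx : p x ≤ 1 := hp.2 ▸ single_le_sum (fun c _ => hp.1 c) (mem_univ x)
  have hterm : ∀ c, |phi q x c - p c| = phi q x c + p c - 2 * (phi q x c * p c) := fun c => by
    by_cases h : c = x
    · subst h
      simp [phi, abs_of_nonneg (sub_nonneg.2 hpx)]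
      ring
    · simp [phi, h, abs_of_nonneg (hp.1 c)]
  simp only [hterm, sum_sub_distrib, sum_add_distrib, ← mul_sum, hp.2]
  simp [phi]
  ring

theorem dvec_phi (w : Fin n → Fin q) {y : Fin n → Fin q → ℝ} (hy : ∀ j, IsDist (y j)) :
    dvec (fun j => phi q (w j)) y = ∑ j, (1 - y j (w j)) := by
  simp only [dvec, sum_abs_phi_sub _ (hy _), mul_sum]
  ring_nf

theorem convexOn_dvec (x : Fin n → Fin q → ℝ) : ConvexOn ℝ Set.univ (dvec x) := by
  have habs : ∀ j c, ConvexOn ℝ Set.univ fun y : Fin n → Fin q → ℝ => |x j c - y j c| :=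
    fun j c => by
      simpa [Function.comp_def, Real.dist_eq, abs_sub_comm] using
        (convexOn_univ_dist (x j c)).comp_linearMap
          ((LinearMap.proj (R := ℝ) c).comp (LinearMap.proj (R := ℝ) (φ := fun _ => Fin q → ℝ) j))
  exact (ConvexOn.finset_sum convex_univ _ fun j _ =>
    ConvexOn.finset_sum convex_univ _ fun c _ => habs j c).smul (by norm_num)

theorem continuous_dvec (x : Fin n → Fin q → ℝ) : Continuous (dvec x) := by
  unfold dvec
  fun_prop

def colorClass (k : Fin L → Fin n → Fin q) (j : Fin n) (c : Fin q) : Finset (Fin L) :=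
  {i | k i j = c}

theorem sum_mul_comp_eq_sum_colorClass (k : Fin L → Fin n → Fin q) (j : Fin n) (ω : Fin L → ℝ)
    (f : Fin q → ℝ) : ∑ i, ω i * f (k i j) = ∑ c, f c * ∑ i ∈ colorClass k j c, ω i := by
  rw [← sum_fiberwise univ (fun i => k i j)]
  refine sum_congr rfl fun c _ => ?_
  rw [mul_sum]
  exact sum_congr rfl fun i hi => by rw [(mem_filter.1 hi).2, mul_comm]

theorem sum_mul_dvec_phi (k : Fin L → Fin n → Fin q) (ω : Fin L → ℝ) {y : Fin n → Fin q → ℝ}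
    (hy : ∀ j, IsDist (y j)) :
    ∑ i, ω i * dvec (fun j => phi q (k i j)) y =
      ∑ j, (∑ i, ω i - ∑ c, y j c * ∑ i ∈ colorClass k j c, ω i) := by
  have hrow : ∀ i, ω i * dvec (fun j => phi q (k i j)) y = ∑ j, (ω i - ω i * y j (k i j)) :=
    fun i => by rw [dvec_phi _ hy, mul_sum]; exact sum_congr rfl fun j _ => by ring
  rw [sum_congr rfl fun i _ => hrow i, sum_comm]
  exact sum_congr rfl fun j _ => by rw [sum_sub_distrib, sum_mul_comp_eq_sum_colorClass]

variable [Nonempty (Fin q)]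

/-- `n · rad_ω` in closed form: in each coordinate the best centre puts all its mass on a
colour of largest weight. -/
noncomputable def dualObjective (k : Fin L → Fin n → Fin q) (ω : Fin L → ℝ) : ℝ :=
  ∑ j, (∑ i, ω i - univ.sup' univ_nonempty fun c => ∑ i ∈ colorClass k j c, ω i)

variable (k : Fin L → Fin n → Fin q)

theorem continuous_dualObjective : Continuous (dualObjective k) := by
  unfold dualObjective
  refine continuous_finsetSum _ fun j _ => (continuous_finsetSum _ fun i _ =>
    continuous_apply i).sub (Continuous.finset_sup'_apply _ fun c _ => ?_)
  fun_prop

theorem dualObjective_le_sum_mul_dvec (ω : Fin L → ℝ) {y : Fin n → Fin q → ℝ}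
    (hy : ∀ j, IsDist (y j)) :
    dualObjective k ω ≤ ∑ i, ω i * dvec (fun j => phi q (k i j)) y := by
  rw [sum_mul_dvec_phi k ω hy]
  refine sum_le_sum fun j _ => sub_le_sub_left ?_ _
  calc ∑ c, y j c * ∑ i ∈ colorClass k j c, ω i
      ≤ ∑ c, y j c * univ.sup' univ_nonempty fun c => ∑ i ∈ colorClass k j c, ω i :=
        sum_le_sum fun c _ => mul_le_mul_of_nonneg_left
          (le_sup' (fun c => ∑ i ∈ colorClass k j c, ω i) (mem_univ c)) ((hy j).1 c)
    _ = _ := by rw [← sum_mul, (hy j).2, one_mul]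

theorem exists_sum_mul_dvec_eq_dualObjective (ω : Fin L → ℝ) :
    ∃ y : Fin n → Fin q → ℝ, (∀ j, IsDist (y j)) ∧
      ∑ i, ω i * dvec (fun j => phi q (k i j)) y = dualObjective k ω := by
  choose c _ hc using fun j => univ.exists_mem_eq_sup' univ_nonempty
    fun c => ∑ i ∈ colorClass k j c, ω i
  refine ⟨fun j => phi q (c j), fun j => isDist_phi _, ?_⟩
  rw [sum_mul_dvec_phi k ω fun j => isDist_phi _, dualObjective]
  refine sum_congr rfl fun j _ => ?_
  simp [phi, hc j]

theorem radOmega_eq (ω : Fin L → ℝ) :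
    radOmega ω (fun i j => phi q (k i j)) = 1 / n * dualObjective k ω := by
  obtain ⟨y, hy, hyω⟩ := exists_sum_mul_dvec_eq_dualObjective k ω
  have hleast : IsLeast {r | ∃ y : Fin n → Fin q → ℝ, (∀ j, IsDist (y j)) ∧
      r = ∑ i, ω i * dvec (fun j => phi q (k i j)) y} (dualObjective k ω) :=
    ⟨⟨y, hy, hyω.symm⟩, by rintro _ ⟨y', hy', rfl⟩; exact dualObjective_le_sum_mul_dvec k ω hy'⟩
  rw [radOmega, hleast.csInf_eq]

end ClosedForm

section Duality

variable {q n L : ℕ} [Nonempty (Fin q)] (k : Fin L → Fin n → Fin q)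

theorem dualObjective_le_iSup_dvec {ω : Fin L → ℝ} (hω : ω ∈ stdSimplex ℝ (Fin L))
    {y : Fin n → Fin q → ℝ} (hy : ∀ j, IsDist (y j)) :
    dualObjective k ω ≤ ⨆ i, dvec (fun j => phi q (k i j)) y :=
  calc dualObjective k ω ≤ ∑ i, ω i * dvec (fun j => phi q (k i j)) y :=
        dualObjective_le_sum_mul_dvec k ω hy
    _ ≤ ∑ i, ω i * ⨆ i, dvec (fun j => phi q (k i j)) y :=
        sum_le_sum fun i _ =>
          mul_le_mul_of_nonneg_left (le_ciSup (f := fun i => dvec (fun j => phi q (k i j)) y)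
            (Set.finite_range _).bddAbove i) (hω.1 i)
    _ = ⨆ i, dvec (fun j => phi q (k i j)) y := by rw [← sum_mul, hω.2, one_mul]

theorem isGreatest_radOmega [Nonempty (Fin L)] :
    IsGreatest ((radOmega · fun i j => phi q (k i j)) '' stdSimplex ℝ (Fin L))
      (radRelax fun i j => phi q (k i j)) := by
  have hYne : {y : Fin n → Fin q → ℝ | ∀ j, IsDist (y j)}.Nonempty :=
    ⟨fun _ => phi q (Classical.arbitrary _), fun _ => isDist_phi _⟩
  obtain ⟨y₀, hy₀, ω, hω, hsaddle⟩ := exists_forall_le_sum_mul_of_convexOn hYne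
    (g := fun i => dvec fun j => phi q (k i j))
    convex_setOf_forall_isDist isCompact_setOf_forall_isDist
    (fun _ => (continuous_dvec _).continuousOn)
    (fun _ => (convexOn_dvec _).subset (Set.subset_univ _) convex_setOf_forall_isDist)
  have hbdd : BddBelow {r | ∃ y : Fin n → Fin q → ℝ, (∀ j, IsDist (y j)) ∧
      r = ⨆ i, dvec (fun j => phi q (k i j)) y} :=
    ⟨0, by rintro _ ⟨y, -, rfl⟩; exact Real.iSup_nonneg fun i => by unfold dvec; positivity⟩
  have hle : sInf {r | ∃ y : Fin n → Fin q → ℝ, (∀ j, IsDist (y j)) ∧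
      r = ⨆ i, dvec (fun j => phi q (k i j)) y} ≤ dualObjective k ω := by
    obtain ⟨y, hy, hyω⟩ := exists_sum_mul_dvec_eq_dualObjective k ω
    exact (csInf_le hbdd ⟨y₀, hy₀, rfl⟩).trans (ciSup_le fun i => hyω ▸ hsaddle y hy i)
  have hge : ∀ ω' ∈ stdSimplex ℝ (Fin L), dualObjective k ω' ≤ sInf {r | ∃ y : Fin n → Fin q → ℝ,
      (∀ j, IsDist (y j)) ∧ r = ⨆ i, dvec (fun j => phi q (k i j)) y} := fun ω' hω' =>
    le_csInf ⟨_, _, hYne.some_mem, rfl⟩ fun _ ⟨_, hy, hr⟩ =>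
      hr ▸ dualObjective_le_iSup_dvec k hω' hy
  refine ⟨⟨ω, hω, ?_⟩, ?_⟩
  · dsimp only
    rw [radOmega_eq, radRelax, le_antisymm (hge ω hω) hle]
  · rintro _ ⟨ω', hω', rfl⟩
    dsimp only
    rw [radOmega_eq, radRelax]
    exact mul_le_mul_of_nonneg_left (hge ω' hω') (by positivity)

theorem radRelax_eq_radOmega_of_isMaxOn [Nonempty (Fin L)] {ω : Fin L → ℝ}
    (hω : ω ∈ stdSimplex ℝ (Fin L)) (hmax : IsMaxOn (dualObjective k) (stdSimplex ℝ (Fin L)) ω) :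
    radRelax (fun i j => phi q (k i j)) = radOmega ω fun i j => phi q (k i j) :=
  (isGreatest_radOmega k).unique ⟨⟨ω, hω, rfl⟩, by
    rintro _ ⟨ω', hω', rfl⟩
    dsimp only
    rw [radOmega_eq, radOmega_eq]
    exact mul_le_mul_of_nonneg_left (isMaxOn_iff.1 hmax ω' hω') (by positivity)⟩

end Duality

section Vertex

variable {q n L : ℕ} [Nonempty (Fin q)] (k : Fin L → Fin n → Fin q)

theorem exists_eventually_dualObjective_add_smul {ω d : Fin L → ℝ}
    (hd : ∀ p, signedSum p ω = 0 → signedSum p d = 0) :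
    ∃ s, ∀ᶠ t in 𝓝 (0 : ℝ), dualObjective k (ω + t • d) = dualObjective k ω + t * s := by
  have hcol : ∀ j, ∃ s, ∀ᶠ t in 𝓝 (0 : ℝ),
      (univ.sup' univ_nonempty fun c =>
          ∑ i ∈ colorClass k j c, ω i + t * ∑ i ∈ colorClass k j c, d i) =
        (univ.sup' univ_nonempty fun c => ∑ i ∈ colorClass k j c, ω i) + t * s := fun j =>
    exists_eventually_sup'_add_mul
      (fun c => ∑ i ∈ colorClass k j c, ω i) (fun c => ∑ i ∈ colorClass k j c, d i)
      fun c c' h => by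
        simpa [sub_eq_zero] using hd (colorClass k j c, colorClass k j c') (by simp [h])
  choose s hs using hcol
  refine ⟨∑ j, (∑ i, d i - s j), ?_⟩
  filter_upwards [eventually_all.2 hs] with t ht
  simp only [dualObjective, Pi.add_apply, Pi.smul_apply, smul_eq_mul, sum_add_distrib, ← mul_sum]
  simp only [ht]
  rw [mul_sum univ (fun j => ∑ i, d i - s j) t, ← sum_add_distrib]
  exact sum_congr rfl fun j _ => by ring

theorem isVertex_of_mem_extremePoints {ω₀ ω : Fin L → ℝ}
    (hmax : IsMaxOn (dualObjective k) (stdSimplex ℝ (Fin L)) ω₀)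
    (hω : ω ∈ {ω ∈ stdSimplex ℝ (Fin L) | dualObjective k ω₀ ≤ dualObjective k ω}.extremePoints ℝ) :
    IsVertex ω := by
  intro ω' hsum htight
  obtain ⟨hωΔ, hωmax⟩ := hω.1
  have hd : ∀ p, signedSum p ω = 0 → signedSum p (ω' - ω) = 0 := fun p hp => by
    rw [map_sub, htight p hp, hp, sub_zero]
  have hΔ := eventually_add_smul_mem_stdSimplex hωΔ (d := ω' - ω)
    (by simp [sum_sub_distrib, hsum]) fun i hi => by simpa using hd ({i}, ∅) (by simpa using hi)
  obtain ⟨s, hs⟩ := exists_eventually_dualObjective_add_smul k hd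
  have hs0 : s = 0 := eq_zero_of_eventually_mul_nonpos <| (hΔ.and hs).mono fun t ht => by
    linarith [isMaxOn_iff.1 hmax _ ht.1, ht.2]
  refine sub_eq_zero.1 (eq_zero_of_mem_extremePoints_of_eventually_add_smul_mem hω ?_)
  exact (hΔ.and hs).mono fun t ht => ⟨ht.1, by rw [ht.2, hs0, mul_zero, add_zero]; exact hωmax⟩

theorem exists_isVertex_isMaxOn [Nonempty (Fin L)] :
    ∃ ω ∈ stdSimplex ℝ (Fin L),
      IsVertex ω ∧ IsMaxOn (dualObjective k) (stdSimplex ℝ (Fin L)) ω := by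
  obtain ⟨ω₀, hω₀, hmax⟩ := (isCompact_stdSimplex ℝ (Fin L)).exists_isMaxOn
    ⟨_, single_mem_stdSimplex ℝ (Classical.arbitrary _)⟩ (continuous_dualObjective k).continuousOn
  have hcpt : IsCompact {ω ∈ stdSimplex ℝ (Fin L) | dualObjective k ω₀ ≤ dualObjective k ω} :=
    (isCompact_stdSimplex ℝ _).of_isClosed_subset ((isClosed_stdSimplex ℝ _).inter
      (isClosed_le continuous_const (continuous_dualObjective k))) (Set.sep_subset _ _)
  obtain ⟨ω, hω⟩ := hcpt.extremePoints_nonempty ⟨ω₀, hω₀, le_rfl⟩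
  exact ⟨ω, hω.1.1, isVertex_of_mem_extremePoints k hmax hω,
    fun ω' hω' => (isMaxOn_iff.1 hmax ω' hω').trans hω.1.2⟩

end Vertex

/-- `rad` is achieved as the maximum of `rad_ω` over a finite set of weightings `Ω_L`. -/
theorem radRelax_achieved_by_finitely_many_omega (q L : ℕ) (hq : 2 ≤ q) (hL : 2 ≤ L) :
    ∃ Ω : Finset (Fin L → ℝ), (∀ ω ∈ Ω, IsDist ω) ∧
      ∀ n : ℕ, 1 ≤ n → ∀ xs : Fin L → Fin n → Fin q → ℝ,
        (∀ i j, ∃ x : Fin q, xs i j = phi q x) →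
        IsGreatest {r : ℝ | ∃ ω ∈ Ω, r = radOmega ω xs} (radRelax xs) := by
  have : Nonempty (Fin q) := ⟨⟨0, by omega⟩⟩
  have : Nonempty (Fin L) := ⟨⟨0, by omega⟩⟩
  refine ⟨finite_setOf_isVertex.toFinset,
    fun ω hω => (finite_setOf_isVertex.mem_toFinset.1 hω).1, fun n _ xs hxs => ?_⟩
  choose k hk using hxs
  obtain rfl : xs = fun i j => phi q (k i j) := funext fun i => funext (hk i)
  obtain ⟨ω, hωΔ, hvert, hmax⟩ := exists_isVertex_isMaxOn k
  refine ⟨⟨ω, finite_setOf_isVertex.mem_toFinset.2 ⟨hωΔ, hvert⟩,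
    radRelax_eq_radOmega_of_isMaxOn k hωΔ hmax⟩, ?_⟩
  rintro _ ⟨ω', hω', rfl⟩
  exact (isGreatest_radOmega k).2 ⟨ω', (finite_setOf_isVertex.mem_toFinset.1 hω').1, rfl⟩
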